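/- arXiv:2006.08766 — 10 statements merged into one kernel-verified Lean document; each statement's English description precedes it below -/
import Mathlib

section
/- The UBCS payment is revenue-neutral: ρ_1·P_1 + ρ_2·P_2 + ⋯ + ρ_n·P_n = 0. -/
open Finset

/-- The UBCS payment is revenue-neutral. -/
theorem ubcs_revenue_neutral
    (n : ℕ) (hn : 1 ≤ n)
    (T β ρ P : ℕ → ℝ)
    (hT : ∀ i j, 1 ≤ i → i ≤ j → j ≤ n → T j ≤ T i)
    (hβ0 : 0 ≤ β 0)
    (hβ : ∀ i j, i ≤ j → j ≤ n → β i ≤ β j)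
    (hρ : ∀ i, 1 ≤ i → i ≤ n → 0 ≤ ρ i)
    (hρ1 : ∑ h ∈ Icc 1 n, ρ h = 1)
    (hP : ∀ i, 1 ≤ i → i ≤ n →
      P i = ∑ h ∈ Icc 1 (i - 1), ρ h * ∑ g ∈ Icc (h + 1) i, (T (g - 1) - T g) * β (g - 1)
          - ∑ h ∈ Icc (i + 1) n, ρ h * ∑ g ∈ Icc (i + 1) h, (T (g - 1) - T g) * β (g - 1)) :
    ∑ h ∈ Icc 1 n, ρ h * P h = 0 := by
  set f : ℕ → ℕ → ℝ := fun a b => ρ a * ρ b * ∑ g ∈ Icc (a + 1) b, (T (g - 1) - T g) * β (g - 1)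
    with hf
  have key : ∀ i ∈ Icc 1 n, ρ i * P i =
      (∑ h ∈ Icc 1 n, if h < i then f h i else 0)
    - (∑ h ∈ Icc 1 n, if i < h then f i h else 0) := by
    intro i hi
    simp only [mem_Icc] at hi
    rw [hP i hi.1 hi.2, mul_sub, Finset.mul_sum, Finset.mul_sum,
      Finset.sum_ite, Finset.sum_const_zero, add_zero,
      Finset.sum_ite, Finset.sum_const_zero, add_zero]
    have h1 : (Icc 1 n).filter (· < i) = Icc 1 (i - 1) := by
      ext x; simp only [mem_filter, mem_Icc]; omega
    have h2 : (Icc 1 n).filter (i < ·) = Icc (i + 1) n := by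
      ext x; simp only [mem_filter, mem_Icc]; omega
    rw [h1, h2]
    congr 1 <;> · apply Finset.sum_congr rfl; intro x _; simp [hf]; ring
  rw [Finset.sum_congr rfl key, Finset.sum_sub_distrib, sub_eq_zero, Finset.sum_comm]
end

section
/- The UBCS payment is strategy-proof: for every path i, every VOT β with β_{i−1} ≤ β ≤ β_i, and every path j, reporting truthfully (hence being assigned path i) costs no more than misreporting (hence being assigned path j): T_i·β + P_i ≤ T_j·β + P_j. (Strategy-proofness part of Theorem 1.) -/
/-!
With the prefix sums `C k = ∑_{0 < g ≤ k} (T (g-1) - T g) * β (g-1)`, the payment is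
`P i = C i - ∑_h ρ h * C h` (the inner sums of the formula are differences of prefix sums and
`∑ ρ = 1`), so `P j - P i = ∑_{i < g ≤ j} (T (g-1) - T g) * β (g-1)`. Telescoping `T` as well,
the extra cost of path `j` over path `i` for a traveller of VOT `b` is
`∑_{i < g ≤ j} (T (g-1) - T g) * (β (g-1) - b)`; since `T` decreases and `β (i-1) ≤ b ≤ β i`,
every term has the sign of `j - i`.
-/

open Finset

theorem sum_Ioc_sub_pred {G : Type*} [AddCommGroup G] (f : ℕ → G) {a b : ℕ} (hab : a ≤ b) :
    ∑ g ∈ Ioc a b, (f g - f (g - 1)) = f b - f a := by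
  induction b, hab using Nat.le_induction with
  | base => simp
  | succ b hab ih => rw [sum_Ioc_succ_top hab, ih, Nat.add_sub_cancel]; abel

theorem sum_Icc_eq_add_add_of_mem {M : Type*} [AddCommMonoid M] (f : ℕ → M) {i n : ℕ}
    (hi : 1 ≤ i) (hin : i ≤ n) :
    ∑ h ∈ Icc 1 n, f h = ∑ h ∈ Icc 1 (i - 1), f h + f i + ∑ h ∈ Icc (i + 1) n, f h := by
  obtain ⟨k, rfl⟩ : ∃ k, i = k + 1 := ⟨i - 1, by omega⟩
  have hIcc (a b : ℕ) : Icc (a + 1) b = Ioc a b := Icc_add_one_left_eq_Ioc a b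
  rw [Nat.add_sub_cancel, hIcc 0, hIcc 0, hIcc, ← sum_Ioc_consecutive f (Nat.zero_le _) hin,
    sum_Ioc_succ_top (Nat.zero_le k)]

theorem payment_eq_prefixSum_sub_expectation {n i : ℕ} {ρ : ℕ → ℝ} (f : ℕ → ℝ)
    (hρ1 : ∑ h ∈ Icc 1 n, ρ h = 1) (hi : 1 ≤ i) (hin : i ≤ n) :
    ∑ h ∈ Icc 1 (i - 1), ρ h * ∑ g ∈ Icc (h + 1) i, f g
        - ∑ h ∈ Icc (i + 1) n, ρ h * ∑ g ∈ Icc (i + 1) h, f g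
      = ∑ g ∈ Ioc 0 i, f g - ∑ h ∈ Icc 1 n, ρ h * ∑ g ∈ Ioc 0 h, f g := by
  set C : ℕ → ℝ := fun k ↦ ∑ g ∈ Ioc 0 k, f g
  have hC {a b : ℕ} (hab : a ≤ b) : ∑ g ∈ Icc (a + 1) b, f g = C b - C a := by
    rw [Icc_add_one_left_eq_Ioc, eq_sub_iff_add_eq', sum_Ioc_consecutive f (Nat.zero_le a) hab]
  have below : ∀ h ∈ Icc 1 (i - 1), ρ h * ∑ g ∈ Icc (h + 1) i, f g = ρ h * (C i - C h) :=
    fun h hh ↦ by rw [hC (by simp at hh; omega)]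
  have above : ∀ h ∈ Icc (i + 1) n, ρ h * ∑ g ∈ Icc (i + 1) h, f g = -(ρ h * (C i - C h)) :=
    fun h hh ↦ by rw [hC (by simp at hh; omega)]; ring
  calc _ = ∑ h ∈ Icc 1 n, ρ h * (C i - C h) := by
        rw [sum_congr rfl below, sum_congr rfl above, sum_neg_distrib,
          sum_Icc_eq_add_add_of_mem _ hi hin]
        ring
    _ = C i - ∑ h ∈ Icc 1 n, ρ h * C h := by
        simp only [mul_sub, sum_sub_distrib, ← sum_mul, hρ1, one_mul]

def IsUbcsPayment (n : ℕ) (T β ρ P : ℕ → ℝ) : Prop :=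
  ∀ i, 1 ≤ i → i ≤ n →
    P i = ∑ h ∈ Icc 1 (i - 1), ρ h * ∑ g ∈ Icc (h + 1) i, (T (g - 1) - T g) * β (g - 1)
        - ∑ h ∈ Icc (i + 1) n, ρ h * ∑ g ∈ Icc (i + 1) h, (T (g - 1) - T g) * β (g - 1)

theorem IsUbcsPayment.sub_eq_sum {n : ℕ} {T β ρ P : ℕ → ℝ} (hP : IsUbcsPayment n T β ρ P)
    (hρ1 : ∑ h ∈ Icc 1 n, ρ h = 1) {i j : ℕ} (hi : 1 ≤ i) (hij : i ≤ j) (hjn : j ≤ n) :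
    P j - P i = ∑ g ∈ Ioc i j, (T (g - 1) - T g) * β (g - 1) := by
  rw [hP j (hi.trans hij) hjn, hP i hi (hij.trans hjn),
    payment_eq_prefixSum_sub_expectation _ hρ1 (hi.trans hij) hjn,
    payment_eq_prefixSum_sub_expectation _ hρ1 hi (hij.trans hjn),
    ← sum_Ioc_consecutive _ (Nat.zero_le i) hij]
  ring

theorem IsUbcsPayment.cost_sub_cost {n : ℕ} {T β ρ P : ℕ → ℝ} (hP : IsUbcsPayment n T β ρ P)
    (hρ1 : ∑ h ∈ Icc 1 n, ρ h = 1) {i j : ℕ} (hi : 1 ≤ i) (hij : i ≤ j) (hjn : j ≤ n) (b : ℝ) :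
    T j * b + P j - (T i * b + P i) = ∑ g ∈ Ioc i j, (T (g - 1) - T g) * (β (g - 1) - b) := by
  have hT : T j - T i = ∑ g ∈ Ioc i j, (T g - T (g - 1)) := (sum_Ioc_sub_pred T hij).symm
  calc T j * b + P j - (T i * b + P i) = (T j - T i) * b + (P j - P i) := by ring
    _ = _ := by
      rw [hT, hP.sub_eq_sum hρ1 hi hij hjn, sum_mul, ← sum_add_distrib]
      exact sum_congr rfl fun g _ ↦ by ring

theorem ubcs_strategy_proof_general
    (n : ℕ)
    (T β ρ P : ℕ → ℝ)
    (hT : ∀ i j, 1 ≤ i → i ≤ j → j ≤ n → T j ≤ T i)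
    (hβ : ∀ i j, i ≤ j → j ≤ n → β i ≤ β j)
    (hρ1 : ∑ h ∈ Icc 1 n, ρ h = 1)
    (hP : ∀ i, 1 ≤ i → i ≤ n →
      P i = ∑ h ∈ Icc 1 (i - 1), ρ h * ∑ g ∈ Icc (h + 1) i, (T (g - 1) - T g) * β (g - 1)
          - ∑ h ∈ Icc (i + 1) n, ρ h * ∑ g ∈ Icc (i + 1) h, (T (g - 1) - T g) * β (g - 1)) :
    ∀ i, 1 ≤ i → i ≤ n → ∀ b : ℝ, β (i - 1) ≤ b → b ≤ β i →
      ∀ j, 1 ≤ j → j ≤ n → T i * b + P i ≤ T j * b + P j := by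
  have hP : IsUbcsPayment n T β ρ P := hP
  intro i hi hin b hb₁ hb₂ j hj hjn
  have hT_step {g : ℕ} (hg : 2 ≤ g) (hgn : g ≤ n) : 0 ≤ T (g - 1) - T g :=
    sub_nonneg.2 (hT _ _ (by omega) (by omega) hgn)
  rcases le_total i j with hij | hji
  · have hcost := hP.cost_sub_cost hρ1 hi hij hjn b
    have hsign : 0 ≤ ∑ g ∈ Ioc i j, (T (g - 1) - T g) * (β (g - 1) - b) :=
      sum_nonneg fun g hg ↦ by
        rw [mem_Ioc] at hg
        exact mul_nonneg (hT_step (by omega) (by omega))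
          (sub_nonneg.2 (hb₂.trans (hβ _ _ (by omega) (by omega))))
    linarith
  · have hcost := hP.cost_sub_cost hρ1 hj hji hin b
    have hsign : ∑ g ∈ Ioc j i, (T (g - 1) - T g) * (β (g - 1) - b) ≤ 0 :=
      sum_nonpos fun g hg ↦ by
        rw [mem_Ioc] at hg
        exact mul_nonpos_of_nonneg_of_nonpos (hT_step (by omega) (by omega))
          (sub_nonpos.2 ((hβ _ _ (by omega) (by omega)).trans hb₁))
    linarith

/-- Strategy-proofness part of Theorem 1. -/
theorem ubcs_strategy_proof
    (n : ℕ) (hn : 1 ≤ n)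
    (T β ρ P : ℕ → ℝ)
    (hT : ∀ i j, 1 ≤ i → i ≤ j → j ≤ n → T j ≤ T i)
    (hβ0 : 0 ≤ β 0)
    (hβ : ∀ i j, i ≤ j → j ≤ n → β i ≤ β j)
    (hρ : ∀ i, 1 ≤ i → i ≤ n → 0 ≤ ρ i)
    (hρ1 : ∑ h ∈ Icc 1 n, ρ h = 1)
    (hP : ∀ i, 1 ≤ i → i ≤ n →
      P i = ∑ h ∈ Icc 1 (i - 1), ρ h * ∑ g ∈ Icc (h + 1) i, (T (g - 1) - T g) * β (g - 1)
          - ∑ h ∈ Icc (i + 1) n, ρ h * ∑ g ∈ Icc (i + 1) h, (T (g - 1) - T g) * β (g - 1)) :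
    ∀ i, 1 ≤ i → i ≤ n → ∀ b : ℝ, β (i - 1) ≤ b → b ≤ β i →
      ∀ j, 1 ≤ j → j ≤ n → T i * b + P i ≤ T j * b + P j :=
  ubcs_strategy_proof_general n T β ρ P hT hβ hρ1 hP
end

section
/- For all paths i ≤ j, the UBCS payment differences telescope according to equation (15) of the paper: P_j − P_i = Σ_{g=i+1}^{j} (T_{g−1} − T_g)·β_{g−1}. -/
open Finset

private lemma sum_Icc_bot {a b : ℕ} (h : a ≤ b) (f : ℕ → ℝ) :
    ∑ g ∈ Icc a b, f g = f a + ∑ g ∈ Icc (a + 1) b, f g := by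
  rw [Finset.Icc_add_one_left_eq_Ioc, ← Finset.Ioc_insert_left h, Finset.sum_insert (by simp)]

/-- Equation (15): the UBCS payment differences telescope. -/
theorem ubcs_payment_difference
    (n : ℕ) (hn : 1 ≤ n)
    (T β ρ P : ℕ → ℝ)
    (hT : ∀ i j, 1 ≤ i → i ≤ j → j ≤ n → T j ≤ T i)
    (hβ0 : 0 ≤ β 0)
    (hβ : ∀ i j, i ≤ j → j ≤ n → β i ≤ β j)
    (hρ : ∀ i, 1 ≤ i → i ≤ n → 0 ≤ ρ i)
    (hρ1 : ∑ h ∈ Icc 1 n, ρ h = 1)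
    (hP : ∀ i, 1 ≤ i → i ≤ n →
      P i = ∑ h ∈ Icc 1 (i - 1), ρ h * ∑ g ∈ Icc (h + 1) i, (T (g - 1) - T g) * β (g - 1)
          - ∑ h ∈ Icc (i + 1) n, ρ h * ∑ g ∈ Icc (i + 1) h, (T (g - 1) - T g) * β (g - 1)) :
    ∀ i j, 1 ≤ i → i ≤ j → j ≤ n →
      P j - P i = ∑ g ∈ Icc (i + 1) j, (T (g - 1) - T g) * β (g - 1) := by
  set f : ℕ → ℝ := fun g => (T (g - 1) - T g) * β (g - 1) with hf
  have step : ∀ k, k + 1 < n → P (k + 2) - P (k + 1) = f (k + 2) := by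
    intro k hkn
    rw [hP (k + 2) (by omega) (by omega), hP (k + 1) (by omega) (by omega)]
    have e1 : k + 2 - 1 = k + 1 := by omega
    have e2 : k + 1 - 1 = k := by omega
    have e3 : k + 2 + 1 = k + 3 := by omega
    have e4 : k + 1 + 1 = k + 2 := by omega
    rw [e1, e2, e3, e4]
    -- expand A1
    have hA1 : ∑ h ∈ Icc 1 (k + 1), ρ h * ∑ g ∈ Icc (h + 1) (k + 2), f g
        = ∑ h ∈ Icc 1 k, ρ h * ∑ g ∈ Icc (h + 1) (k + 1), f g
          + f (k + 2) * ∑ h ∈ Icc 1 (k + 1), ρ h := by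
      rw [Finset.sum_Icc_succ_top (by omega : 1 ≤ k + 1),
          Finset.sum_Icc_succ_top (by omega : 1 ≤ k + 1)]
      have h1 : ∀ h ∈ Icc 1 k, ρ h * ∑ g ∈ Icc (h + 1) (k + 2), f g
          = ρ h * ∑ g ∈ Icc (h + 1) (k + 1), f g + f (k + 2) * ρ h := by
        intro h hh
        simp only [mem_Icc] at hh
        rw [Finset.sum_Icc_succ_top (by omega : h + 1 ≤ k + 2)]
        ring
      rw [Finset.sum_congr rfl h1, Finset.sum_add_distrib, ← Finset.mul_sum]
      have h2 : ∑ g ∈ Icc (k + 1 + 1) (k + 2), f g = f (k + 2) := by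
        rw [e4, Finset.Icc_self, Finset.sum_singleton]
      rw [h2]
      ring
    -- expand B0
    have hB0 : ∑ h ∈ Icc (k + 2) n, ρ h * ∑ g ∈ Icc (k + 2) h, f g
        = f (k + 2) * ∑ h ∈ Icc (k + 2) n, ρ h
          + ∑ h ∈ Icc (k + 2) n, ρ h * ∑ g ∈ Icc (k + 3) h, f g := by
      have h1 : ∀ h ∈ Icc (k + 2) n, ρ h * ∑ g ∈ Icc (k + 2) h, f g
          = f (k + 2) * ρ h + ρ h * ∑ g ∈ Icc (k + 3) h, f g := by
        intro h hh
        simp only [mem_Icc] at hh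
        rw [sum_Icc_bot (by omega : k + 2 ≤ h) f, show k + 2 + 1 = k + 3 from by omega]
        ring
      rw [Finset.sum_congr rfl h1, Finset.sum_add_distrib, ← Finset.mul_sum]
    -- B1 relation
    have hB1 : ∑ h ∈ Icc (k + 2) n, ρ h * ∑ g ∈ Icc (k + 3) h, f g
        = ∑ h ∈ Icc (k + 3) n, ρ h * ∑ g ∈ Icc (k + 3) h, f g := by
      rw [sum_Icc_bot (by omega : k + 2 ≤ n)
        (fun h => ρ h * ∑ g ∈ Icc (k + 3) h, f g)]
      have he : Icc (k + 3) (k + 2) = (∅ : Finset ℕ) := by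
        rw [Finset.Icc_eq_empty]; omega
      simp only [he, Finset.sum_empty, mul_zero, zero_add, show k + 2 + 1 = k + 3 from by omega]
    -- probability split
    have hsplit : ∑ h ∈ Icc 1 (k + 1), ρ h + ∑ h ∈ Icc (k + 2) n, ρ h = 1 := by
      rw [← hρ1]
      have hu : Icc 1 n = Icc 1 (k + 1) ∪ Icc (k + 2) n := by
        ext x
        simp only [mem_Icc, mem_union]
        omega
      have hd : Disjoint (Icc 1 (k + 1)) (Icc (k + 2) n) := by
        rw [Finset.disjoint_left]
        intro a ha hb
        simp only [mem_Icc] at ha hb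
        omega
      rw [hu, Finset.sum_union hd]
    rw [hA1, hB0, hB1]
    have h5 : f (k + 2) * ∑ h ∈ Icc 1 (k + 1), ρ h
        + f (k + 2) * ∑ h ∈ Icc (k + 2) n, ρ h = f (k + 2) := by
      rw [← mul_add, hsplit, mul_one]
    linarith
  intro i j hi hij
  induction j, hij using Nat.le_induction with
  | base =>
    intro _
    rw [Finset.Icc_eq_empty (by omega : ¬ i + 1 ≤ i), Finset.sum_empty, sub_self]
  | succ j hij ih =>
    intro hjn
    have hstep : P (j + 1) - P j = f (j + 1) := by
      obtain ⟨k, rfl⟩ : ∃ k, j = k + 1 := ⟨j - 1, by omega⟩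
      exact step k (by omega)
    rw [Finset.sum_Icc_succ_top (by omega : i + 1 ≤ j + 1), ← ih (by omega)]
    simp only [hf] at hstep ⊢
    linarith
end

section
/- Suppose a payment vector Q_1,…,Q_n satisfies, for all paths i < j, the pairwise incentive constraints (T_i − T_j)·β_i ≤ Q_j − Q_i ≤ (T_i − T_j)·β_{j−1}, and is revenue-neutral: ρ_1·Q_1 + ⋯ + ρ_n·Q_n = 0. Then Q_i = P_i for every i = 1,…,n, where P is the UBCS payment. -/
open Finset

/-- Any payment vector satisfying the pairwise incentive constraints and revenue
neutrality coincides with the UBCS payment. -/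
theorem ubcs_unique_pairwise
    (n : ℕ) (hn : 1 ≤ n)
    (T β ρ P : ℕ → ℝ)
    (hT : ∀ i j, 1 ≤ i → i ≤ j → j ≤ n → T j ≤ T i)
    (hβ0 : 0 ≤ β 0)
    (hβ : ∀ i j, i ≤ j → j ≤ n → β i ≤ β j)
    (hρ : ∀ i, 1 ≤ i → i ≤ n → 0 ≤ ρ i)
    (hρ1 : ∑ h ∈ Icc 1 n, ρ h = 1)
    (hP : ∀ i, 1 ≤ i → i ≤ n →
      P i = ∑ h ∈ Icc 1 (i - 1), ρ h * ∑ g ∈ Icc (h + 1) i, (T (g - 1) - T g) * β (g - 1)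
          - ∑ h ∈ Icc (i + 1) n, ρ h * ∑ g ∈ Icc (i + 1) h, (T (g - 1) - T g) * β (g - 1))
    (Q : ℕ → ℝ)
    (hIC : ∀ i j, 1 ≤ i → i < j → j ≤ n →
      (T i - T j) * β i ≤ Q j - Q i ∧ Q j - Q i ≤ (T i - T j) * β (j - 1))
    (hRN : ∑ h ∈ Icc 1 n, ρ h * Q h = 0) :
    ∀ i, 1 ≤ i → i ≤ n → Q i = P i := by
  intro i hi1 hin
  set D : ℕ → ℝ := fun g => (T (g - 1) - T g) * β (g - 1) with hD
  -- consecutive increments are pinned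
  have step : ∀ k, 1 ≤ k → k + 1 ≤ n → Q (k + 1) - Q k = D (k + 1) := by
    intro k hk hkn
    obtain ⟨h1, h2⟩ := hIC k (k + 1) hk (Nat.lt_succ_self k) hkn
    have e : (k + 1) - 1 = k := by omega
    rw [e] at h2
    have : D (k + 1) = (T k - T (k + 1)) * β k := by simp [hD, e]
    linarith
  -- telescoping
  have tel : ∀ a b, 1 ≤ a → a ≤ b → b ≤ n → Q b - Q a = ∑ g ∈ Icc (a + 1) b, D g := by
    intro a b ha hab hbn
    induction b, hab using Nat.le_induction with
    | base => simp
    | succ b hb ih =>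
      have hbn' : b ≤ n := by omega
      rw [Finset.sum_Icc_succ_top (by omega : a + 1 ≤ b + 1)]
      have h1 := step b (le_trans ha hb) hbn
      have h2 := ih hbn'
      linarith
  have hsplit : ∀ f : ℕ → ℝ, ∑ h ∈ Icc 1 n, f h
      = ∑ h ∈ Icc 1 (i - 1), f h + f i + ∑ h ∈ Icc (i + 1) n, f h := by
    intro f
    have h1 : Icc 1 n = Icc 1 (i - 1) ∪ Icc i n := by
      ext x; simp only [mem_Icc, mem_union]; omega
    have h2 : Icc i n = insert i (Icc (i + 1) n) := by
      ext x; simp only [mem_Icc, mem_insert]; omega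
    have hdisj : Disjoint (Icc 1 (i - 1)) (Icc i n) := by
      rw [Finset.disjoint_left]; intro x hx hx'
      simp only [mem_Icc] at hx hx'; omega
    have hnot : i ∉ Icc (i + 1) n := by simp
    rw [h1, Finset.sum_union hdisj, h2, Finset.sum_insert hnot]
    ring
  have key : Q i = ∑ h ∈ Icc 1 n, ρ h * (Q i - Q h) := by
    have e : ∑ h ∈ Icc 1 n, ρ h * (Q i - Q h)
        = (∑ h ∈ Icc 1 n, ρ h) * Q i - ∑ h ∈ Icc 1 n, ρ h * Q h := by
      rw [Finset.sum_mul, ← Finset.sum_sub_distrib]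
      exact Finset.sum_congr rfl fun h _ => by ring
    rw [e, hρ1, hRN]; ring
  rw [key, hsplit (fun h => ρ h * (Q i - Q h)), hP i hi1 hin]
  have eL : ∑ h ∈ Icc 1 (i - 1), ρ h * (Q i - Q h)
      = ∑ h ∈ Icc 1 (i - 1), ρ h * ∑ g ∈ Icc (h + 1) i, D g := by
    refine Finset.sum_congr rfl fun h hh => ?_
    simp only [mem_Icc] at hh
    rw [tel h i hh.1 (by omega) hin]
  have eR : ∑ h ∈ Icc (i + 1) n, ρ h * (Q i - Q h)
      = ∑ h ∈ Icc (i + 1) n, -(ρ h * ∑ g ∈ Icc (i + 1) h, D g) := by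
    refine Finset.sum_congr rfl fun h hh => ?_
    simp only [mem_Icc] at hh
    have := tel i h hi1 (by omega) hh.2
    have : Q i - Q h = -∑ g ∈ Icc (i + 1) h, D g := by linarith
    rw [this]; ring
  rw [eL, eR, Finset.sum_neg_distrib]
  simp [hD]
  ring
end

section
/- Suppose a payment vector Q_1,…,Q_n satisfies the adjacent-path difference equations Q_{i+1} − Q_i = (T_i − T_{i+1})·β_i for every i = 1,…,n−1, together with revenue neutrality ρ_1·Q_1 + ⋯ + ρ_n·Q_n = 0. Then Q_i = P_i for every i = 1,…,n, where P is the UBCS payment. -/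
/-!
Revenue neutrality with `∑ ρ = 1` gives `Q i = ∑ₕ ρ h (Q i - Q h)`, and the adjacent-path
equations telescope each difference `Q i - Q h` into the sum of the increments
`(T (g - 1) - T g) β (g - 1)` between `h` and `i`. Splitting the weighted sum at `h = i`
yields exactly the two sums defining `P i`.
-/

open Finset

section Intervals

variable {M : Type*} [AddCommGroup M]

theorem sub_eq_sum_Ioc_of_forall_succ_sub {f d : ℕ → M} {a b : ℕ}
    (hstep : ∀ k, a ≤ k → k + 1 ≤ b → f (k + 1) - f k = d (k + 1))
    {i j : ℕ} (hai : a ≤ i) (hij : i ≤ j) (hjb : j ≤ b) :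
    f j - f i = ∑ g ∈ Ioc i j, d g := by
  induction j, hij using Nat.le_induction with
  | base => simp
  | succ j hij ih =>
    rw [sum_Ioc_succ_top hij, ← ih (by omega), ← hstep j (by omega) hjb]
    abel

theorem sum_Icc_eq_sum_Ico_add_add_sum_Ioc (f : ℕ → M) {a i b : ℕ}
    (hai : a ≤ i) (hib : i ≤ b) :
    ∑ k ∈ Icc a b, f k = ∑ k ∈ Ico a i, f k + f i + ∑ k ∈ Ioc i b, f k := by
  rw [← Ico_add_one_right_eq_Icc, ← sum_Ico_consecutive f hai (by omega : i ≤ b + 1),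
    sum_eq_sum_Ico_succ_bot (by omega : i < b + 1), Ico_add_one_add_one_eq_Ioc, add_assoc]

end Intervals

theorem eq_sum_mul_sub_of_sum_eq_one {ι R : Type*} [CommRing R] {s : Finset ι} {ρ Q : ι → R}
    (hρ : ∑ h ∈ s, ρ h = 1) (hQ : ∑ h ∈ s, ρ h * Q h = 0) (x : R) :
    x = ∑ h ∈ s, ρ h * (x - Q h) := by
  simp only [mul_sub, sum_sub_distrib, ← sum_mul, hρ, hQ, one_mul, sub_zero]

theorem ubcs_unique_adjacent_general
    (n : ℕ)
    (T β ρ P : ℕ → ℝ)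
    (hρ1 : ∑ h ∈ Icc 1 n, ρ h = 1)
    (hP : ∀ i, 1 ≤ i → i ≤ n →
      P i = ∑ h ∈ Icc 1 (i - 1), ρ h * ∑ g ∈ Icc (h + 1) i, (T (g - 1) - T g) * β (g - 1)
          - ∑ h ∈ Icc (i + 1) n, ρ h * ∑ g ∈ Icc (i + 1) h, (T (g - 1) - T g) * β (g - 1))
    (Q : ℕ → ℝ)
    (hadj : ∀ i, 1 ≤ i → i + 1 ≤ n → Q (i + 1) - Q i = (T i - T (i + 1)) * β i)
    (hRN : ∑ h ∈ Icc 1 n, ρ h * Q h = 0) :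
    ∀ i, 1 ≤ i → i ≤ n → Q i = P i := by
  have htele : ∀ {i j}, 1 ≤ i → i ≤ j → j ≤ n →
      Q j - Q i = ∑ g ∈ Icc (i + 1) j, (T (g - 1) - T g) * β (g - 1) := fun hi hij hjn => by
    rw [Icc_add_one_left_eq_Ioc]
    exact sub_eq_sum_Ioc_of_forall_succ_sub (fun k hk hkn => by simpa using hadj k hk hkn)
      hi hij hjn
  intro i hi hin
  rw [hP i hi hin, eq_sum_mul_sub_of_sum_eq_one hρ1 hRN (Q i),
    sum_Icc_eq_sum_Ico_add_add_sum_Ioc _ hi hin, sub_self, mul_zero, add_zero,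
    Icc_sub_one_right_eq_Ico_of_not_isMin (not_isMin_iff.2 ⟨0, hi⟩),
    ← Icc_add_one_left_eq_Ioc, sub_eq_add_neg, ← sum_neg_distrib]
  congr 1
  · refine sum_congr rfl fun h hh => ?_
    obtain ⟨h_pos, h_lt⟩ := mem_Ico.1 hh
    rw [htele h_pos h_lt.le hin]
  · refine sum_congr rfl fun h hh => ?_
    obtain ⟨h_gt, h_le⟩ := mem_Icc.1 hh
    rw [← neg_sub, htele hi (by omega) h_le, mul_neg]

/-- Any payment vector satisfying the adjacent-path difference equations and revenue
neutrality coincides with the UBCS payment. -/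
theorem ubcs_unique_adjacent
    (n : ℕ) (hn : 1 ≤ n)
    (T β ρ P : ℕ → ℝ)
    (hT : ∀ i j, 1 ≤ i → i ≤ j → j ≤ n → T j ≤ T i)
    (hβ0 : 0 ≤ β 0)
    (hβ : ∀ i j, i ≤ j → j ≤ n → β i ≤ β j)
    (hρ : ∀ i, 1 ≤ i → i ≤ n → 0 ≤ ρ i)
    (hρ1 : ∑ h ∈ Icc 1 n, ρ h = 1)
    (hP : ∀ i, 1 ≤ i → i ≤ n →
      P i = ∑ h ∈ Icc 1 (i - 1), ρ h * ∑ g ∈ Icc (h + 1) i, (T (g - 1) - T g) * β (g - 1)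
          - ∑ h ∈ Icc (i + 1) n, ρ h * ∑ g ∈ Icc (i + 1) h, (T (g - 1) - T g) * β (g - 1))
    (Q : ℕ → ℝ)
    (hadj : ∀ i, 1 ≤ i → i + 1 ≤ n → Q (i + 1) - Q i = (T i - T (i + 1)) * β i)
    (hRN : ∑ h ∈ Icc 1 n, ρ h * Q h = 0) :
    ∀ i, 1 ≤ i → i ≤ n → Q i = P i :=
  ubcs_unique_adjacent_general n T β ρ P hρ1 hP Q hadj hRN
end

section
/- The UBCS payments are nondecreasing in the path index: for all paths i ≤ j, P_i ≤ P_j; that is, subscribers assigned to faster paths (larger index, smaller travel time) make larger payments. -/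
open Finset

lemma ubcs_step
    (n : ℕ)
    (T β ρ P : ℕ → ℝ)
    (hT : ∀ i j, 1 ≤ i → i ≤ j → j ≤ n → T j ≤ T i)
    (hβ0 : 0 ≤ β 0)
    (hβ : ∀ i j, i ≤ j → j ≤ n → β i ≤ β j)
    (hρ1 : ∑ h ∈ Icc 1 n, ρ h = 1)
    (hP : ∀ i, 1 ≤ i → i ≤ n →
      P i = ∑ h ∈ Icc 1 (i - 1), ρ h * ∑ g ∈ Icc (h + 1) i, (T (g - 1) - T g) * β (g - 1)
          - ∑ h ∈ Icc (i + 1) n, ρ h * ∑ g ∈ Icc (i + 1) h, (T (g - 1) - T g) * β (g - 1))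
    (i : ℕ) (hi : 1 ≤ i) (hin : i + 1 ≤ n) : P i ≤ P (i + 1) := by
  obtain ⟨m, rfl⟩ : ∃ m, i = m + 1 := ⟨i - 1, by omega⟩
  set D : ℕ → ℝ := fun g => (T (g - 1) - T g) * β (g - 1) with hD
  have hDpos : 0 ≤ D (m + 2) := by
    have h1 : T (m + 2) ≤ T (m + 1) := hT (m + 1) (m + 2) (by omega) (by omega) hin
    have h2 : (0:ℝ) ≤ β (m + 1) := le_trans hβ0 (hβ 0 (m + 1) (Nat.zero_le _) (by omega))
    rw [hD]
    simp only [show m + 2 - 1 = m + 1 from rfl]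
    exact mul_nonneg (by linarith) h2
  have key : P (m + 1 + 1) = P (m + 1) + D (m + 2) := by
    rw [hP (m + 1) (by omega) (by omega), hP (m + 1 + 1) (by omega) (by omega)]
    simp only [show m + 1 + 1 = m + 2 from rfl, show m + 2 - 1 = m + 1 from rfl,
      show m + 2 + 1 = m + 3 from rfl, Nat.add_sub_cancel]
    -- first sums
    have hA : ∑ h ∈ Icc 1 (m + 1), ρ h * ∑ g ∈ Icc (h + 1) (m + 2), D g
        = (∑ h ∈ Icc 1 m, ρ h * ∑ g ∈ Icc (h + 1) (m + 1), D g)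
          + (∑ h ∈ Icc 1 (m + 1), ρ h) * D (m + 2) := by
      have h1 : ∀ h ∈ Icc 1 (m + 1), ρ h * ∑ g ∈ Icc (h + 1) (m + 2), D g
          = ρ h * ∑ g ∈ Icc (h + 1) (m + 1), D g + ρ h * D (m + 2) := by
        intro h hh
        have hmem := Finset.mem_Icc.mp hh
        rw [Finset.sum_Icc_succ_top (by omega : h + 1 ≤ m + 1 + 1), mul_add]
      rw [Finset.sum_congr rfl h1, Finset.sum_add_distrib, ← Finset.sum_mul]
      congr 1
      rw [Finset.sum_Icc_succ_top (by omega : 1 ≤ m + 1)]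
      have he : Icc (m + 1 + 1) (m + 1) = ∅ := Finset.Icc_eq_empty (by omega)
      rw [he, Finset.sum_empty, mul_zero, add_zero]
    -- second sums
    have hB : ∑ h ∈ Icc (m + 2) n, ρ h * ∑ g ∈ Icc (m + 2) h, D g
        = (∑ h ∈ Icc (m + 3) n, ρ h * ∑ g ∈ Icc (m + 3) h, D g)
          + (∑ h ∈ Icc (m + 2) n, ρ h) * D (m + 2) := by
      have h1 : ∀ h ∈ Icc (m + 2) n, ρ h * ∑ g ∈ Icc (m + 2) h, D g
          = ρ h * ∑ g ∈ Icc (m + 3) h, D g + ρ h * D (m + 2) := by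
        intro h hh
        have hmem : m + 2 ≤ h := (Finset.mem_Icc.mp hh).1
        have hs : ∑ g ∈ Icc (m + 2) h, D g = D (m + 2) + ∑ g ∈ Icc (m + 3) h, D g := by
          rw [show Icc (m + 3) h = Ioc (m + 2) h from Finset.Icc_add_one_left_eq_Ioc _ _,
            Finset.add_sum_Ioc_eq_sum_Icc hmem]
        rw [hs, mul_add]
        ring
      rw [Finset.sum_congr rfl h1, Finset.sum_add_distrib, ← Finset.sum_mul]
      congr 1
      have hsplit : ∑ h ∈ Icc (m + 2) n, ρ h * ∑ g ∈ Icc (m + 3) h, D g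
          = ρ (m + 2) * ∑ g ∈ Icc (m + 3) (m + 2), D g
            + ∑ h ∈ Ioc (m + 2) n, ρ h * ∑ g ∈ Icc (m + 3) h, D g := by
        exact (Finset.add_sum_Ioc_eq_sum_Icc
          (f := fun h => ρ h * ∑ g ∈ Icc (m + 3) h, D g) (show m + 2 ≤ n from hin)).symm
      rw [hsplit, show Ioc (m + 2) n = Icc (m + 3) n from (Finset.Icc_add_one_left_eq_Ioc _ _).symm]
      have he : Icc (m + 3) (m + 2) = ∅ := Finset.Icc_eq_empty (by omega)
      rw [he, Finset.sum_empty, mul_zero, zero_add]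
    rw [hA, hB]
    have hρsplit : (∑ h ∈ Icc 1 (m + 1), ρ h) + (∑ h ∈ Icc (m + 2) n, ρ h) = 1 := by
      rw [← hρ1, show Icc 1 (m + 1) = Ioc 0 (m + 1) from Finset.Icc_add_one_left_eq_Ioc _ _,
        show Icc (m + 2) n = Ioc (m + 1) n from Finset.Icc_add_one_left_eq_Ioc _ _,
        show Icc 1 n = Ioc 0 n from Finset.Icc_add_one_left_eq_Ioc _ _]
      exact Finset.sum_Ioc_consecutive ρ (Nat.zero_le _) (by omega)
    nlinarith [hρsplit, hA, hB]
  rw [key]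
  linarith

/-- The UBCS payments are nondecreasing in the path index. -/
theorem ubcs_payment_monotone
    (n : ℕ) (hn : 1 ≤ n)
    (T β ρ P : ℕ → ℝ)
    (hT : ∀ i j, 1 ≤ i → i ≤ j → j ≤ n → T j ≤ T i)
    (hβ0 : 0 ≤ β 0)
    (hβ : ∀ i j, i ≤ j → j ≤ n → β i ≤ β j)
    (hρ : ∀ i, 1 ≤ i → i ≤ n → 0 ≤ ρ i)
    (hρ1 : ∑ h ∈ Icc 1 n, ρ h = 1)
    (hP : ∀ i, 1 ≤ i → i ≤ n →
      P i = ∑ h ∈ Icc 1 (i - 1), ρ h * ∑ g ∈ Icc (h + 1) i, (T (g - 1) - T g) * β (g - 1)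
          - ∑ h ∈ Icc (i + 1) n, ρ h * ∑ g ∈ Icc (i + 1) h, (T (g - 1) - T g) * β (g - 1)) :
    ∀ i j, 1 ≤ i → i ≤ j → j ≤ n → P i ≤ P j := by
  intro i j hi hij hjn
  induction j, hij using Nat.le_induction with
  | base => exact le_rfl
  | succ k hk ih =>
    have hkn : k ≤ n := by omega
    exact le_trans (ih hkn) (ubcs_step n T β ρ P hT hβ0 hβ hρ1 hP k (by omega) hjn)
end

section
/- For any paths h ≤ i and any real β with β ≥ β_{i−1}: (T_h − T_i)·β − Σ_{g=h+1}^{i} (T_{g−1} − T_g)·β_{g−1} ≥ (T_h − T_i)·(β − β_{i−1}) ≥ 0. (Key inequality in the proof of Theorem 2 for paths slower than the assigned one.) -/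
open Finset

lemma telescope_Icc (f : ℕ → ℝ) (h i : ℕ) (hhi : h ≤ i) :
    ∑ g ∈ Icc (h + 1) i, (f (g - 1) - f g) = f h - f i := by
  induction i with
  | zero =>
    interval_cases h
    simp
  | succ k ih =>
    rcases Nat.lt_or_ge h (k + 1) with hlt | hge
    · have hk : h ≤ k := Nat.lt_succ_iff.mp hlt
      rw [Finset.sum_Icc_succ_top (by omega : h + 1 ≤ k + 1), ih hk]
      simp
    · have : h = k + 1 := le_antisymm hhi hge
      subst this
      simp

/-- Key inequality in the proof of Theorem 2 for paths slower than the assigned one. -/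
theorem ubcs_key_inequality_slower
    (n : ℕ) (hn : 1 ≤ n)
    (T β : ℕ → ℝ)
    (hT : ∀ i j, 1 ≤ i → i ≤ j → j ≤ n → T j ≤ T i)
    (hβ0 : 0 ≤ β 0)
    (hβ : ∀ i j, i ≤ j → j ≤ n → β i ≤ β j) :
    ∀ h i, 1 ≤ h → h ≤ i → i ≤ n → ∀ b : ℝ, β (i - 1) ≤ b →
      (T h - T i) * b - ∑ g ∈ Icc (h + 1) i, (T (g - 1) - T g) * β (g - 1)
        ≥ (T h - T i) * (b - β (i - 1))
      ∧ (T h - T i) * (b - β (i - 1)) ≥ 0 := by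
  intro h i h1 hhi hin b hb
  have hTi : T i ≤ T h := hT h i h1 hhi hin
  have hsum : ∑ g ∈ Icc (h + 1) i, (T (g - 1) - T g) * β (g - 1)
      ≤ ∑ g ∈ Icc (h + 1) i, (T (g - 1) - T g) * β (i - 1) := by
    apply Finset.sum_le_sum
    intro g hg
    simp only [Finset.mem_Icc] at hg
    have hTg : T g ≤ T (g - 1) := hT (g - 1) g (by omega) (by omega) (by omega)
    have hβg : β (g - 1) ≤ β (i - 1) := hβ (g - 1) (i - 1) (by omega) (by omega)
    nlinarith
  have htel : ∑ g ∈ Icc (h + 1) i, (T (g - 1) - T g) * β (i - 1)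
      = (T h - T i) * β (i - 1) := by
    rw [← Finset.sum_mul, telescope_Icc T h i hhi]
  constructor
  · nlinarith
  · nlinarith
end

section
/- For every path i and every real β, the difference between a quitter's expected cost and a subscriber's cost decomposes as in equation (18) of the paper: (Σ_{h=1}^{n} ρ_h·T_h)·β − (T_i·β + P_i) = Σ_{h=1}^{i−1} ρ_h·[(T_h − T_i)·β − Σ_{g=h+1}^{i} (T_{g−1} − T_g)·β_{g−1}] + Σ_{h=i+1}^{n} ρ_h·[(T_h − T_i)·β + Σ_{g=i+1}^{h} (T_{g−1} − T_g)·β_{g−1}]. -/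
open Finset

/- Since the weights sum to one, the quitter's expected cost minus `T i * b` is the weighted sum
of `(T h - T i) * b`; splitting it at `h = i` (where the term vanishes) and distributing the two
halves of `P i` over the weights gives the decomposition. -/

theorem Finset.sum_mul_sub_of_sum_eq_one {ι R : Type*} [CommRing R] {s : Finset ι} {w : ι → R}
    (hw : ∑ i ∈ s, w i = 1) (x : ι → R) (c : R) :
    ∑ i ∈ s, w i * x i - c = ∑ i ∈ s, w i * (x i - c) := by
  simp only [mul_sub, sum_sub_distrib, ← sum_mul, hw, one_mul]

theorem Finset.sum_Icc_one_split {M : Type*} [AddCommMonoid M] {i n : ℕ} (hi : 1 ≤ i)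
    (hin : i ≤ n) (f : ℕ → M) :
    ∑ h ∈ Icc 1 n, f h = ∑ h ∈ Icc 1 (i - 1), f h + f i + ∑ h ∈ Icc (i + 1) n, f h := by
  have hlow : Icc 1 (i - 1) = Ico 1 i := by ext; simp only [mem_Icc, mem_Ico]; omega
  rw [hlow, ← Ico_add_one_right_eq_Icc, ← Ico_add_one_right_eq_Icc,
    ← sum_Ico_consecutive f hi (Nat.le_add_right_of_le hin),
    sum_eq_sum_Ico_succ_bot (Nat.lt_add_one_of_le hin), add_assoc]

theorem ubcs_cost_difference_decomposition_general
    (n : ℕ)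
    (T β ρ P : ℕ → ℝ)
    (hρ1 : ∑ h ∈ Icc 1 n, ρ h = 1)
    (hP : ∀ i, 1 ≤ i → i ≤ n →
      P i = ∑ h ∈ Icc 1 (i - 1), ρ h * ∑ g ∈ Icc (h + 1) i, (T (g - 1) - T g) * β (g - 1)
          - ∑ h ∈ Icc (i + 1) n, ρ h * ∑ g ∈ Icc (i + 1) h, (T (g - 1) - T g) * β (g - 1)) :
    ∀ i, 1 ≤ i → i ≤ n → ∀ b : ℝ,
      (∑ h ∈ Icc 1 n, ρ h * T h) * b - (T i * b + P i) =
        ∑ h ∈ Icc 1 (i - 1), ρ h *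
          ((T h - T i) * b - ∑ g ∈ Icc (h + 1) i, (T (g - 1) - T g) * β (g - 1))
      + ∑ h ∈ Icc (i + 1) n, ρ h *
          ((T h - T i) * b + ∑ g ∈ Icc (i + 1) h, (T (g - 1) - T g) * β (g - 1)) := by
  intro i hi hin b
  have hcentred : (∑ h ∈ Icc 1 n, ρ h * T h) * b - T i * b
      = ∑ h ∈ Icc 1 n, ρ h * ((T h - T i) * b) := by
    simp only [sum_mul, mul_assoc, sub_mul]
    exact sum_mul_sub_of_sum_eq_one hρ1 _ _
  rw [hP i hi hin, ← sub_sub, hcentred, sum_Icc_one_split hi hin]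
  simp only [sub_self, zero_mul, mul_zero, add_zero, mul_add, mul_sub, sum_add_distrib,
    sum_sub_distrib]
  ring

/-- Equation (18): decomposition of the difference between a quitter's expected cost and a
subscriber's cost. -/
theorem ubcs_cost_difference_decomposition
    (n : ℕ) (hn : 1 ≤ n)
    (T β ρ P : ℕ → ℝ)
    (hT : ∀ i j, 1 ≤ i → i ≤ j → j ≤ n → T j ≤ T i)
    (hβ0 : 0 ≤ β 0)
    (hβ : ∀ i j, i ≤ j → j ≤ n → β i ≤ β j)
    (hρ : ∀ i, 1 ≤ i → i ≤ n → 0 ≤ ρ i)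
    (hρ1 : ∑ h ∈ Icc 1 n, ρ h = 1)
    (hP : ∀ i, 1 ≤ i → i ≤ n →
      P i = ∑ h ∈ Icc 1 (i - 1), ρ h * ∑ g ∈ Icc (h + 1) i, (T (g - 1) - T g) * β (g - 1)
          - ∑ h ∈ Icc (i + 1) n, ρ h * ∑ g ∈ Icc (i + 1) h, (T (g - 1) - T g) * β (g - 1)) :
    ∀ i, 1 ≤ i → i ≤ n → ∀ b : ℝ,
      (∑ h ∈ Icc 1 n, ρ h * T h) * b - (T i * b + P i) =
        ∑ h ∈ Icc 1 (i - 1), ρ h *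
          ((T h - T i) * b - ∑ g ∈ Icc (h + 1) i, (T (g - 1) - T g) * β (g - 1))
      + ∑ h ∈ Icc (i + 1) n, ρ h *
          ((T h - T i) * b + ∑ g ∈ Icc (i + 1) h, (T (g - 1) - T g) * β (g - 1)) :=
  ubcs_cost_difference_decomposition_general n T β ρ P hρ1 hP
end

section
/- Joining the UBCS scheme is Pareto-improving compared with quitting it: for every path i and every real β with β_{i−1} ≤ β ≤ β_i, the subscriber's cost is at most the quitter's expected cost, i.e., T_i·β + P_i ≤ (Σ_{h=1}^{n} ρ_h·T_h)·β. (First part of Theorem 2; a quitter is assigned path h with probability ρ_h.) -/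
open Finset

lemma tele_sum (T : ℕ → ℝ) (h : ℕ) : ∀ i, h ≤ i →
    ∑ g ∈ Icc (h + 1) i, (T (g - 1) - T g) = T h - T i := by
  intro i hi
  induction i, hi using Nat.le_induction with
  | base => simp
  | succ i hi ih =>
    rw [Finset.sum_Icc_succ_top (by omega)]
    simp only [Nat.add_sub_cancel]
    rw [ih]; ring

/-- First part of Theorem 2: joining the UBCS scheme is Pareto-improving compared with
quitting it. -/
theorem ubcs_pareto_vs_quitting
    (n : ℕ) (hn : 1 ≤ n)
    (T β ρ P : ℕ → ℝ)
    (hT : ∀ i j, 1 ≤ i → i ≤ j → j ≤ n → T j ≤ T i)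
    (hβ0 : 0 ≤ β 0)
    (hβ : ∀ i j, i ≤ j → j ≤ n → β i ≤ β j)
    (hρ : ∀ i, 1 ≤ i → i ≤ n → 0 ≤ ρ i)
    (hρ1 : ∑ h ∈ Icc 1 n, ρ h = 1)
    (hP : ∀ i, 1 ≤ i → i ≤ n →
      P i = ∑ h ∈ Icc 1 (i - 1), ρ h * ∑ g ∈ Icc (h + 1) i, (T (g - 1) - T g) * β (g - 1)
          - ∑ h ∈ Icc (i + 1) n, ρ h * ∑ g ∈ Icc (i + 1) h, (T (g - 1) - T g) * β (g - 1)) :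
    ∀ i, 1 ≤ i → i ≤ n → ∀ b : ℝ, β (i - 1) ≤ b → b ≤ β i →
      T i * b + P i ≤ (∑ h ∈ Icc 1 n, ρ h * T h) * b := by
  intro i h1i hin b hb1 hb2
  have hb0 : 0 ≤ b :=
    le_trans hβ0 (le_trans (hβ 0 (i - 1) (by omega) (by omega)) hb1)
  -- split lemma
  have hsplit : ∀ f : ℕ → ℝ, ∑ h ∈ Icc 1 n, f h =
      (∑ h ∈ Icc 1 (i - 1), f h) + f i + ∑ h ∈ Icc (i + 1) n, f h := by
    intro f
    have h1 : Icc i n = insert i (Icc (i + 1) n) := by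
      ext x; simp only [Finset.mem_Icc, Finset.mem_insert]; omega
    have h2 : ∑ h ∈ Ioc 0 (i-1), f h + ∑ h ∈ Ioc (i-1) n, f h = ∑ h ∈ Ioc 0 n, f h :=
      Finset.sum_Ioc_consecutive f (by omega) (by omega)
    have e0 : Ioc 0 (i-1) = Icc 1 (i-1) := by ext x; simp; omega
    have e1 : Ioc (i-1) n = Icc i n := by ext x; simp; omega
    have e2 : Ioc 0 n = Icc 1 n := by ext x; simp; omega
    rw [e0, e1, e2, h1, Finset.sum_insert (by simp)] at h2
    linarith [h2]
  have hI1 : ∑ h ∈ Icc 1 (i - 1), ρ h * ∑ g ∈ Icc (h + 1) i, (T (g - 1) - T g) * β (g - 1)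
      ≤ ∑ h ∈ Icc 1 (i - 1), ρ h * ((T h - T i) * b) := by
    apply Finset.sum_le_sum
    intro h hh
    simp only [Finset.mem_Icc] at hh
    apply mul_le_mul_of_nonneg_left _ (hρ h hh.1 (by omega))
    have : (T h - T i) * b = ∑ g ∈ Icc (h + 1) i, (T (g - 1) - T g) * b := by
      rw [← Finset.sum_mul, tele_sum T h i (by omega)]
    rw [this]
    apply Finset.sum_le_sum
    intro g hg
    simp only [Finset.mem_Icc] at hg
    have hTg : 0 ≤ T (g - 1) - T g :=
      sub_nonneg.2 (hT (g - 1) g (by omega) (by omega) (by omega))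
    have hbg : β (g - 1) ≤ b :=
      le_trans (hβ (g - 1) (i - 1) (by omega) (by omega)) hb1
    exact mul_le_mul_of_nonneg_left hbg hTg
  have hI2 : ∑ h ∈ Icc (i + 1) n, ρ h * ((T i - T h) * b)
      ≤ ∑ h ∈ Icc (i + 1) n, ρ h * ∑ g ∈ Icc (i + 1) h, (T (g - 1) - T g) * β (g - 1) := by
    apply Finset.sum_le_sum
    intro h hh
    simp only [Finset.mem_Icc] at hh
    apply mul_le_mul_of_nonneg_left _ (hρ h (by omega) hh.2)
    have : (T i - T h) * b = ∑ g ∈ Icc (i + 1) h, (T (g - 1) - T g) * b := by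
      rw [← Finset.sum_mul, tele_sum T i h (by omega)]
    rw [this]
    apply Finset.sum_le_sum
    intro g hg
    simp only [Finset.mem_Icc] at hg
    have hTg : 0 ≤ T (g - 1) - T g :=
      sub_nonneg.2 (hT (g - 1) g (by omega) (by omega) (by omega))
    have hbg : b ≤ β (g - 1) :=
      le_trans hb2 (hβ i (g - 1) (by omega) (by omega))
    exact mul_le_mul_of_nonneg_left hbg hTg
  have e1 : ∑ h ∈ Icc 1 n, ρ h * ((T h - T i) * b)
      = (∑ h ∈ Icc 1 n, ρ h * T h * b) - T i * b := by
    have : ∑ h ∈ Icc 1 n, ρ h * ((T h - T i) * b)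
        = ∑ h ∈ Icc 1 n, (ρ h * T h * b - ρ h * (T i * b)) := by
      apply Finset.sum_congr rfl; intros; ring
    rw [this, Finset.sum_sub_distrib]
    have h2 : ∑ x ∈ Icc 1 n, ρ x * (T i * b) = T i * b := by
      rw [← Finset.sum_mul, hρ1, one_mul]
    rw [h2]
  have hid := hsplit (fun h => ρ h * ((T h - T i) * b))
  simp only [sub_self, zero_mul, mul_zero, add_zero] at hid
  have e3 : ∑ h ∈ Icc (i + 1) n, ρ h * ((T i - T h) * b)
      = - ∑ h ∈ Icc (i + 1) n, ρ h * ((T h - T i) * b) := by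
    rw [← Finset.sum_neg_distrib]
    apply Finset.sum_congr rfl; intros; ring
  have e2 : (∑ h ∈ Icc 1 n, ρ h * T h) * b = ∑ h ∈ Icc 1 n, ρ h * T h * b :=
    Finset.sum_mul _ _ _
  rw [hP i h1i hin, e2]
  linarith [hI1, hI2, hid, e1, e3]
end

section
/- If t : ℝ → ℝ is convex, differentiable, nonnegative on [0, ∞), and strictly increasing on [0, ∞), then the function q ↦ q·t(q) is strictly convex on [0, ∞). (This underlies the uniqueness of the optimal link flow vector in the system-optimal problem of Step 1, whose objective is Σ_a q_a·t_a(q_a).) -/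
/-- If a link travel time function is convex, differentiable, nonnegative and strictly
increasing on `[0, ∞)`, then `q ↦ q * t q` is strictly convex on `[0, ∞)`. -/
theorem strictConvexOn_mul_travel_time
    (t : ℝ → ℝ)
    (hconv : ConvexOn ℝ (Set.Ici (0 : ℝ)) t)
    (hdiff : Differentiable ℝ t)
    (hnonneg : ∀ q ∈ Set.Ici (0 : ℝ), 0 ≤ t q)
    (hmono : StrictMonoOn t (Set.Ici (0 : ℝ))) :
    StrictConvexOn ℝ (Set.Ici (0 : ℝ)) (fun q => q * t q) := by
  refine ⟨convex_Ici 0, fun x hx y hy hxy a b ha hb hab => ?_⟩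
  simp only [smul_eq_mul]
  have hz : (0:ℝ) ≤ a * x + b * y := by
    have hx0 : (0:ℝ) ≤ x := hx
    have hy0 : (0:ℝ) ≤ y := hy
    positivity
  have ht : t (a * x + b * y) ≤ a * t x + b * t y := by
    have := hconv.2 hx hy ha.le hb.le hab
    simpa using this
  have hprod : 0 < a * b * ((x - y) * (t x - t y)) := by
    rcases lt_or_gt_of_ne hxy with h | h
    · have h2 := hmono hx hy h
      nlinarith [mul_pos (mul_pos ha hb) (mul_pos (sub_pos.mpr h2) (sub_pos.mpr h))]
    · have h2 := hmono hy hx h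
      nlinarith [mul_pos (mul_pos ha hb) (mul_pos (sub_pos.mpr h2) (sub_pos.mpr h))]
  have key : a * (x * t x) + b * (y * t y) - (a * x + b * y) * (a * t x + b * t y)
      = a * b * ((x - y) * (t x - t y)) := by
    have hb' : b = 1 - a := by linarith
    subst hb'
    ring
  linarith [mul_le_mul_of_nonneg_left ht hz, hprod, key]
end
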